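/- Let c be a real constant and let u : ℝ² → ℝ be a smooth function of (x,y) with u_x > 0 everywhere, satisfying u_xy = c·√(u_x) at every point. Then ω = u_xx/√(u_x) is an x-integral and ω̄ = u_yyy is a y-integral of this equation: the partial derivative of u_xx/√(u_x) with respect to y vanishes at every point, and the partial derivative of u_yyy with respect to x vanishes at every point. -/

import Mathlib

/-- Partial derivative with respect to the first variable. -/
noncomputable def px (u : ℝ → ℝ → ℝ) : ℝ → ℝ → ℝ := fun x y => deriv (fun x' => u x' y) x

/-- Partial derivative with respect to the second variable. -/
noncomputable def py (u : ℝ → ℝ → ℝ) : ℝ → ℝ → ℝ := fun x y => deriv (fun y' => u x y') y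

section helpers
variable {u : ℝ → ℝ → ℝ}

lemma sliceX_diff (hu : ContDiff ℝ (⊤ : ℕ∞) (fun p : ℝ × ℝ => u p.1 p.2)) (y : ℝ) :
    Differentiable ℝ (fun x' => u x' y) :=
  (hu.comp (contDiff_id.prodMk contDiff_const)).differentiable (by simp)

lemma sliceY_diff (hu : ContDiff ℝ (⊤ : ℕ∞) (fun p : ℝ × ℝ => u p.1 p.2)) (x : ℝ) :
    Differentiable ℝ (fun y' => u x y') :=
  (hu.comp (contDiff_const.prodMk contDiff_id)).differentiable (by simp)

lemma hasDerivAt_sliceX (hu : ContDiff ℝ (⊤ : ℕ∞) (fun p : ℝ × ℝ => u p.1 p.2)) (x y : ℝ) :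
    HasDerivAt (fun x' => u x' y) (px u x y) x :=
  (sliceX_diff hu y x).hasDerivAt

lemma hasDerivAt_sliceY (hu : ContDiff ℝ (⊤ : ℕ∞) (fun p : ℝ × ℝ => u p.1 p.2)) (x y : ℝ) :
    HasDerivAt (fun y' => u x y') (py u x y) y :=
  (sliceY_diff hu x y).hasDerivAt

lemma px_eq_fderiv (hu : ContDiff ℝ (⊤ : ℕ∞) (fun p : ℝ × ℝ => u p.1 p.2)) (x y : ℝ) :
    px u x y = fderiv ℝ (fun p : ℝ × ℝ => u p.1 p.2) (x, y) (1, 0) := by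
  have h1 : HasDerivAt (fun x' : ℝ => ((x', y) : ℝ × ℝ)) (1, 0) x :=
    (hasDerivAt_id x).prodMk (hasDerivAt_const x y)
  have h2 := (hu.differentiable (by simp) (x, y)).hasFDerivAt.comp_hasDerivAt x h1
  exact h2.deriv

lemma py_eq_fderiv (hu : ContDiff ℝ (⊤ : ℕ∞) (fun p : ℝ × ℝ => u p.1 p.2)) (x y : ℝ) :
    py u x y = fderiv ℝ (fun p : ℝ × ℝ => u p.1 p.2) (x, y) (0, 1) := by
  have h1 : HasDerivAt (fun y' : ℝ => ((x, y') : ℝ × ℝ)) (0, 1) y :=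
    (hasDerivAt_const y x).prodMk (hasDerivAt_id y)
  have h2 := (hu.differentiable (by simp) (x, y)).hasFDerivAt.comp_hasDerivAt y h1
  exact h2.deriv

lemma smooth_px (hu : ContDiff ℝ (⊤ : ℕ∞) (fun p : ℝ × ℝ => u p.1 p.2)) :
    ContDiff ℝ (⊤ : ℕ∞) (fun p : ℝ × ℝ => px u p.1 p.2) := by
  have : (fun p : ℝ × ℝ => px u p.1 p.2)
      = fun p : ℝ × ℝ => fderiv ℝ (fun p : ℝ × ℝ => u p.1 p.2) p (1, 0) := by
    funext p; exact px_eq_fderiv hu p.1 p.2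
  rw [this]
  exact (hu.fderiv_right (by simp)).clm_apply contDiff_const

lemma smooth_py (hu : ContDiff ℝ (⊤ : ℕ∞) (fun p : ℝ × ℝ => u p.1 p.2)) :
    ContDiff ℝ (⊤ : ℕ∞) (fun p : ℝ × ℝ => py u p.1 p.2) := by
  have : (fun p : ℝ × ℝ => py u p.1 p.2)
      = fun p : ℝ × ℝ => fderiv ℝ (fun p : ℝ × ℝ => u p.1 p.2) p (0, 1) := by
    funext p; exact py_eq_fderiv hu p.1 p.2
  rw [this]
  exact (hu.fderiv_right (by simp)).clm_apply contDiff_const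

lemma fderiv_Dw (hu : ContDiff ℝ (⊤ : ℕ∞) (fun p : ℝ × ℝ => u p.1 p.2)) (w v : ℝ × ℝ) (p : ℝ × ℝ) :
    fderiv ℝ (fun q : ℝ × ℝ => fderiv ℝ (fun p : ℝ × ℝ => u p.1 p.2) q w) p v
      = fderiv ℝ (fderiv ℝ (fun p : ℝ × ℝ => u p.1 p.2)) p v w := by
  have hdc : DifferentiableAt ℝ (fderiv ℝ (fun p : ℝ × ℝ => u p.1 p.2)) p :=
    ((hu.fderiv_right (m := (⊤ : ℕ∞)) (by simp)).differentiable (by simp)) p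
  rw [fderiv_clm_apply hdc (differentiableAt_const w)]
  simp

lemma swap (hu : ContDiff ℝ (⊤ : ℕ∞) (fun p : ℝ × ℝ => u p.1 p.2)) (x y : ℝ) :
    px (py u) x y = py (px u) x y := by
  rw [px_eq_fderiv (smooth_py hu) x y, py_eq_fderiv (smooth_px hu) x y]
  have h1 : (fun p : ℝ × ℝ => py u p.1 p.2)
      = fun q : ℝ × ℝ => fderiv ℝ (fun p : ℝ × ℝ => u p.1 p.2) q (0, 1) := by
    funext p; exact py_eq_fderiv hu p.1 p.2
  have h2 : (fun p : ℝ × ℝ => px u p.1 p.2)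
      = fun q : ℝ × ℝ => fderiv ℝ (fun p : ℝ × ℝ => u p.1 p.2) q (1, 0) := by
    funext p; exact px_eq_fderiv hu p.1 p.2
  rw [h1, h2, fderiv_Dw hu _ _ _, fderiv_Dw hu _ _ _]
  exact (hu.contDiffAt.isSymmSndFDerivAt (by simp [minSmoothness_of_isRCLikeNormedField]; exact WithTop.coe_le_coe.mpr (le_top : (2 : ℕ∞) ≤ ⊤))) (1, 0) (0, 1)

end helpers

theorem stmt_12 (c : ℝ) (u : ℝ → ℝ → ℝ)
    (hu : ContDiff ℝ (⊤ : ℕ∞) (fun p : ℝ × ℝ => u p.1 p.2))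
    (hux : ∀ x y, 0 < px u x y)
    (heq : ∀ x y, px (py u) x y = c * Real.sqrt (px u x y)) :
    (∀ x y, py (fun x y => px (px u) x y / Real.sqrt (px u x y)) x y = 0) ∧
    (∀ x y, px (py (py (py u))) x y = 0) := by
  have hpx := smooth_px hu
  have hpxx := smooth_px hpx
  have hpy := smooth_py hu
  have hpyy := smooth_py hpy
  -- py (px u) = c √(px u)
  have hyx : ∀ x y, py (px u) x y = c * Real.sqrt (px u x y) := by
    intro x y; rw [← swap hu]; exact heq x y
  -- px (px u) slices, etc.
  -- py (py u) x y derivative facts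
  -- Step: py (px (px u)) = c * px(px u) / (2 √(px u))
  have hkey : ∀ x y, py (px (px u)) x y = c * (px (px u) x y / (2 * Real.sqrt (px u x y))) := by
    intro x y
    rw [← swap hpx x y]
    have : (fun x' => py (px u) x' y) = fun x' => c * Real.sqrt (px u x' y) := by
      funext x'; exact hyx x' y
    show deriv (fun x' => py (px u) x' y) x = _
    rw [this]
    have hb := hasDerivAt_sliceX hpx x y
    have hs := (hb.sqrt (ne_of_gt (hux x y))).const_mul c
    exact hs.deriv
  -- Step: py (px (py u)) i.e. py of c√(px u) in y is c^2/2
  have hconst : ∀ x y, py (py (px u)) x y = c ^ 2 / 2 := by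
    intro x y
    have : (fun y' => py (px u) x y') = fun y' => c * Real.sqrt (px u x y') := by
      funext y'; exact hyx x y'
    show deriv (fun y' => py (px u) x y') y = _
    rw [this]
    have hb : HasDerivAt (fun y' => px u x y') (py (px u) x y) y := hasDerivAt_sliceY hpx x y
    have hs := (hb.sqrt (ne_of_gt (hux x y))).const_mul c
    rw [hs.deriv, hyx x y]
    have h0 : Real.sqrt (px u x y) ≠ 0 := by
      exact Real.sqrt_ne_zero'.mpr (hux x y)
    field_simp
  constructor
  · intro x y
    show deriv (fun y' => px (px u) x y' / Real.sqrt (px u x y')) y = 0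
    have hA : HasDerivAt (fun y' => px (px u) x y') (py (px (px u)) x y) y :=
      hasDerivAt_sliceY hpxx x y
    have hB : HasDerivAt (fun y' => px u x y') (py (px u) x y) y := hasDerivAt_sliceY hpx x y
    have hS := hB.sqrt (ne_of_gt (hux x y))
    have hs0 : Real.sqrt (px u x y) ≠ 0 := by exact Real.sqrt_ne_zero'.mpr (hux x y)
    have hd : HasDerivAt (fun y' => px (px u) x y' / Real.sqrt (px u x y')) _ y := hA.div hS hs0
    rw [hd.deriv, hkey x y, hyx x y]
    field_simp
    ring
  · intro x y
    rw [swap hpyy x y]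
    have hg : ∀ a b, px (py (py u)) a b = c ^ 2 / 2 := by
      intro a b
      rw [swap hpy a b]
      have he : (fun y' => px (py u) a y') = fun y' => py (px u) a y' :=
        funext fun y' => swap hu a y'
      show deriv (fun y' => px (py u) a y') b = _
      rw [he]
      exact hconst a b
    show deriv (fun y' => px (py (py u)) x y') y = 0
    have he : (fun y' => px (py (py u)) x y') = fun _ => c ^ 2 / 2 :=
      funext fun y' => hg x y'
    rw [he, deriv_const]
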